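/- arXiv:1611.06910 — 3 statements merged into one kernel-verified Lean document; each statement's English description precedes it below -/
import Mathlib

section
/- Let v : T × 2^[m] → ℝ≥0 be monotone, subadditive, with no externalities, and v(t,{j}) = V(t_j). Fix Q_j ≥ 0 and τ ≥ 0, let Y(t) = {j : V(t_j) < Q_j + τ}, v̂(t,S) = v(t, S∩Y(t)), and μ(t,S) = max_{S'⊆S}(v̂(t,S') − Σ_{j∈S'} Q_j). If X* is a subset of X maximizing v̂(t,·) − Σ Q_j over subsets of X (choosing a maximizer of minimal size), then for every k ∈ X*: Q_k ≤ V(t_k) < Q_k + τ. -/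
/-!
Removing `k` from `X*` changes the objective `v(t, S ∩ Y) − Σ_{j∈S} Q_j` in two ways: the price
drops by `Q_k`, and the value drops by at most `v(t,{k}) = V(t_k)` by subadditivity, and not at
all if `k ∉ Y`. Since removal must strictly lose, `k ∉ Y` would force `Q_k < 0`, and `k ∈ Y`
gives `Q_k < V(t_k)`.
-/

open Finset

namespace Finset

variable {ι : Type*} [DecidableEq ι]

/-- With `f = v t` and `Y = Y(t)` this is the paper's `v̂(t,s) − Σ_{j∈s} Q_j`. -/
def surplus (f : Finset ι → ℝ) (Q : ι → ℝ) (Y s : Finset ι) : ℝ :=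
  f (s ∩ Y) - ∑ j ∈ s, Q j

variable {f : Finset ι → ℝ} {Q : ι → ℝ} {Y s : Finset ι} {k : ι}

lemma surplus_erase_of_notMem (hks : k ∈ s) (hkY : k ∉ Y) :
    surplus f Q Y (s.erase k) = surplus f Q Y s + Q k := by
  have hinter : s.erase k ∩ Y = s ∩ Y := by
    rw [erase_inter, erase_eq_of_notMem (fun h => hkY (mem_inter.1 h).2)]
  rw [surplus, surplus, hinter, sum_erase_eq_sub hks]
  ring

lemma surplus_le_surplus_erase_add (hsub : ∀ U W, f (U ∪ W) ≤ f U + f W)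
    (hks : k ∈ s) (hkY : k ∈ Y) :
    surplus f Q Y s ≤ surplus f Q Y (s.erase k) + (f {k} - Q k) := by
  have hinter : s ∩ Y = {k} ∪ (s.erase k ∩ Y) := by
    rw [← insert_eq, erase_inter, insert_erase (mem_inter.2 ⟨hks, hkY⟩)]
  have hval := hsub {k} (s.erase k ∩ Y)
  rw [← hinter] at hval
  rw [surplus, surplus, sum_erase_eq_sub hks]
  linarith

lemma mem_of_surplus_erase_lt (hQ : 0 ≤ Q k) (hks : k ∈ s)
    (hlt : surplus f Q Y (s.erase k) < surplus f Q Y s) : k ∈ Y := by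
  by_contra hkY
  rw [surplus_erase_of_notMem hks hkY] at hlt
  linarith

lemma lt_apply_singleton_of_surplus_erase_lt (hsub : ∀ U W, f (U ∪ W) ≤ f U + f W)
    (hks : k ∈ s) (hkY : k ∈ Y) (hlt : surplus f Q Y (s.erase k) < surplus f Q Y s) :
    Q k < f {k} := by
  linarith [surplus_le_surplus_erase_add (Q := Q) hsub hks hkY]

end Finset

theorem minimal_maximizer_values_general {T : Type*} {m : ℕ}
    (v : T → Finset (Fin m) → ℝ) (V : T → Fin m → ℝ)
    (hsub : ∀ t (U W : Finset (Fin m)), v t (U ∪ W) ≤ v t U + v t W)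
    (hsing : ∀ t j, v t {j} = V t j)
    (Q : Fin m → ℝ) (τ : ℝ) (hQ : ∀ j, 0 ≤ Q j)
    (t : T) (Xstar : Finset (Fin m))
    -- minimal size: removing any element strictly decreases the objective
    (hmin : ∀ k ∈ Xstar,
      v t ((Xstar.erase k) ∩ Finset.univ.filter (fun j => V t j < Q j + τ)) -
          ∑ j ∈ Xstar.erase k, Q j <
        v t (Xstar ∩ Finset.univ.filter (fun j => V t j < Q j + τ)) - ∑ j ∈ Xstar, Q j) :
    ∀ k ∈ Xstar, Q k ≤ V t k ∧ V t k < Q k + τ := by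
  intro k hk
  have hkY : k ∈ univ.filter (fun j => V t j < Q j + τ) :=
    mem_of_surplus_erase_lt (hQ k) hk (hmin k hk)
  refine ⟨?_, (mem_filter.1 hkY).2⟩
  rw [← hsing]
  exact (lt_apply_singleton_of_surplus_erase_lt (hsub t) hk hkY (hmin k hk)).le

/-- Any minimal-size maximizer `X*` of `S' ↦ v̂(t,S') − Σ_{j∈S'} Q_j` over subsets of `X`
contains only items with `Q_k ≤ V(t_k) < Q_k + τ`. -/
theorem minimal_maximizer_values {T C : Type*} {m : ℕ}
    (coord : T → Fin m → C)
    (v : T → Finset (Fin m) → ℝ) (V : T → Fin m → ℝ)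
    (hv0 : ∀ t S, 0 ≤ v t S)
    (hmono : ∀ t (U W : Finset (Fin m)), U ⊆ W → v t U ≤ v t W)
    (hsub : ∀ t (U W : Finset (Fin m)), v t (U ∪ W) ≤ v t U + v t W)
    (hext : ∀ t t' (S : Finset (Fin m)),
      (∀ j ∈ S, coord t j = coord t' j) → v t S = v t' S)
    (hsing : ∀ t j, v t {j} = V t j)
    (Q : Fin m → ℝ) (τ : ℝ) (hQ : ∀ j, 0 ≤ Q j) (hτ : 0 ≤ τ)
    (t : T) (X Xstar : Finset (Fin m)) (hXX : Xstar ⊆ X)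
    -- `Xstar` maximizes `S' ↦ v(t, S' ∩ Y(t)) − Σ_{j∈S'} Q_j` over subsets of `X`
    (hmax : ∀ S' ⊆ X,
      v t (S' ∩ Finset.univ.filter (fun j => V t j < Q j + τ)) - ∑ j ∈ S', Q j ≤
        v t (Xstar ∩ Finset.univ.filter (fun j => V t j < Q j + τ)) - ∑ j ∈ Xstar, Q j)
    -- minimal size: removing any element strictly decreases the objective
    (hmin : ∀ k ∈ Xstar,
      v t ((Xstar.erase k) ∩ Finset.univ.filter (fun j => V t j < Q j + τ)) -
          ∑ j ∈ Xstar.erase k, Q j <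
        v t (Xstar ∩ Finset.univ.filter (fun j => V t j < Q j + τ)) - ∑ j ∈ Xstar, Q j) :
    ∀ k ∈ Xstar, Q k ≤ V t k ∧ V t k < Q k + τ :=
  minimal_maximizer_values_general v V hsub hsing Q τ hQ t Xstar hmin
end

section
/- Under the setup of the previous lemma, the function μ is τ-Lipschitz in the following sense: for all types t, t' and sets X, Y ⊆ [m], letting H = {j ∈ X ∩ Y : t_j = t'_j}, we have |μ(t,X) − μ(t',Y)| ≤ τ · (|X Δ Y| + |X ∩ Y| − |H|). -/
/-
Let `X*` be a bundle realising `μ(t, X)` and let `H` be the items of `X ∩ Y` on which `t` and `t'`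
agree. The bundle `X* ∩ H` is available at `(t', Y)`, and by no externalities it is worth the same
to `t'` as to `t`. Removing `X* \ H` from `X*` costs, by subadditivity, at most the sum of the
single-item values of the items of `X* \ H` that `v̂` counts, each below `Q_j + τ`, while saving
their prices. Hence `μ(t, X) − μ(t', Y) ≤ τ · |X \ H|`, where `|X \ H| = |X \ Y| + |X ∩ Y| − |H|`;
the other half is symmetric.
-/

noncomputable def surplusFn {T : Type*} {m : ℕ}
    (vhat : T → Finset (Fin m) → ℝ) (Q : Fin m → ℝ) (t : T) (S : Finset (Fin m)) : ℝ :=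
  S.powerset.sup' ⟨∅, Finset.empty_mem_powerset S⟩
    (fun S' => vhat t S' - ∑ j ∈ S', Q j)

open Finset

section Subadditive

variable {α : Type*} [DecidableEq α] (f : Finset α → ℝ)

theorem apply_union_le_add_sum_singleton (hsub : ∀ U W, f (U ∪ W) ≤ f U + f W)
    (U W : Finset α) : f (U ∪ W) ≤ f U + ∑ j ∈ W, f {j} := by
  induction W using Finset.induction_on with
  | empty => simp
  | insert a W ha ih =>
    rw [union_insert, insert_eq, sum_insert ha]
    linarith [hsub {a} (U ∪ W)]

theorem apply_le_inter_add_sum_singleton (hsub : ∀ U W, f (U ∪ W) ≤ f U + f W)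
    (S B : Finset α) : f S ≤ f (S ∩ B) + ∑ j ∈ S \ B, f {j} := by
  calc f S = f (S ∩ B ∪ S \ B) := by rw [union_comm, sdiff_union_inter]
    _ ≤ _ := apply_union_le_add_sum_singleton f hsub _ _

end Subadditive

theorem card_sdiff_le_of_subset_inter {α : Type*} [DecidableEq α] {X Y H : Finset α}
    (hH : H ⊆ X ∩ Y) :
    ((X \ H).card : ℝ) ≤ ((X \ Y ∪ Y \ X).card : ℝ) + ((X ∩ Y).card : ℝ) - (H.card : ℝ) := by
  have hX : (X \ H).card + H.card = (X \ Y).card + (X ∩ Y).card := by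
    rw [card_sdiff_add_card_eq_card (hH.trans inter_subset_left), card_sdiff_add_card_inter]
  have hXY : (X \ Y).card ≤ (X \ Y ∪ Y \ X).card := card_le_card subset_union_left
  have hX' : ((X \ H).card : ℝ) + H.card = (X \ Y).card + (X ∩ Y).card := by exact_mod_cast hX
  have hXY' : ((X \ Y).card : ℝ) ≤ (X \ Y ∪ Y \ X).card := by exact_mod_cast hXY
  linarith

section Surplus

variable {T C : Type*} {m : ℕ} {coord : T → Fin m → C}
  {v : T → Finset (Fin m) → ℝ} {Vv : C → ℝ} {Q : Fin m → ℝ} {τ : ℝ}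
  {vhat : T → Finset (Fin m) → ℝ}

theorem exists_subset_surplusFn_eq (t : T) (X : Finset (Fin m)) :
    ∃ S ⊆ X, surplusFn vhat Q t X = vhat t S - ∑ j ∈ S, Q j := by
  obtain ⟨S, hS, hmax⟩ := exists_mem_eq_sup' ⟨∅, empty_mem_powerset X⟩
    (fun S' => vhat t S' - ∑ j ∈ S', Q j)
  exact ⟨S, mem_powerset.1 hS, hmax⟩

theorem le_surplusFn {t : T} {S X : Finset (Fin m)} (hS : S ⊆ X) :
    vhat t S - ∑ j ∈ S, Q j ≤ surplusFn vhat Q t X :=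
  le_sup' (fun S' => vhat t S' - ∑ j ∈ S', Q j) (mem_powerset.2 hS)

theorem vhat_congr
    (hext : ∀ t t' (S : Finset (Fin m)),
      (∀ j ∈ S, coord t j = coord t' j) → v t S = v t' S)
    (hvhat : ∀ t S, vhat t S =
      v t (S ∩ Finset.univ.filter (fun j => Vv (coord t j) < Q j + τ)))
    {t t' : T} {S : Finset (Fin m)} (hS : ∀ j ∈ S, coord t j = coord t' j) :
    vhat t S = vhat t' S := by
  have hcheap : S ∩ univ.filter (fun j => Vv (coord t j) < Q j + τ)
      = S ∩ univ.filter (fun j => Vv (coord t' j) < Q j + τ) := by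
    ext j
    simp only [mem_inter, mem_filter, mem_univ, true_and]
    exact and_congr_right fun hj => by rw [hS j hj]
  rw [hvhat, hvhat, hcheap]
  exact hext t t' _ fun j hj => hS j (mem_inter.1 hj).1

theorem vhat_le_inter_add_sum (hQ : ∀ j, 0 ≤ Q j) (hτ : 0 ≤ τ)
    (hsub : ∀ t (U W : Finset (Fin m)), v t (U ∪ W) ≤ v t U + v t W)
    (hsing : ∀ t j, v t {j} = Vv (coord t j))
    (hvhat : ∀ t S, vhat t S =
      v t (S ∩ Finset.univ.filter (fun j => Vv (coord t j) < Q j + τ)))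
    (t : T) (S H : Finset (Fin m)) :
    vhat t S ≤ vhat t (S ∩ H) + ∑ j ∈ S \ H, (Q j + τ) := by
  set cheap := univ.filter (fun j => Vv (coord t j) < Q j + τ)
  have hcheap : ∑ j ∈ (S ∩ cheap) \ H, v t {j} ≤ ∑ j ∈ S \ H, (Q j + τ) :=
    calc ∑ j ∈ (S ∩ cheap) \ H, v t {j} ≤ ∑ j ∈ (S ∩ cheap) \ H, (Q j + τ) :=
          sum_le_sum fun j hj => by
            have : Vv (coord t j) < Q j + τ := (mem_filter.1 (mem_inter.1 (mem_sdiff.1 hj).1).2).2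
            linarith [hsing t j]
      _ ≤ ∑ j ∈ S \ H, (Q j + τ) :=
          sum_le_sum_of_subset_of_nonneg (sdiff_subset_sdiff inter_subset_left le_rfl)
            fun j _ _ => by linarith [hQ j]
  rw [hvhat, hvhat, inter_right_comm]
  linarith [apply_le_inter_add_sum_singleton (v t) (hsub t) (S ∩ cheap) H]

theorem surplusFn_sub_le (hQ : ∀ j, 0 ≤ Q j) (hτ : 0 ≤ τ)
    (hsub : ∀ t (U W : Finset (Fin m)), v t (U ∪ W) ≤ v t U + v t W)
    (hext : ∀ t t' (S : Finset (Fin m)),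
      (∀ j ∈ S, coord t j = coord t' j) → v t S = v t' S)
    (hsing : ∀ t j, v t {j} = Vv (coord t j))
    (hvhat : ∀ t S, vhat t S =
      v t (S ∩ Finset.univ.filter (fun j => Vv (coord t j) < Q j + τ)))
    {t t' : T} {X Y H : Finset (Fin m)} (hHY : H ⊆ Y) (hH : ∀ j ∈ H, coord t j = coord t' j) :
    surplusFn vhat Q t X - surplusFn vhat Q t' Y ≤ τ * (X \ H).card := by
  obtain ⟨S, hSX, hS⟩ := exists_subset_surplusFn_eq (vhat := vhat) (Q := Q) t X
  have hrestrict : vhat t' (S ∩ H) - ∑ j ∈ S ∩ H, Q j ≤ surplusFn vhat Q t' Y :=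
    le_surplusFn (inter_subset_right.trans hHY)
  have hsame : vhat t (S ∩ H) = vhat t' (S ∩ H) :=
    vhat_congr hext hvhat fun j hj => hH j (mem_inter.1 hj).2
  have hsplit := vhat_le_inter_add_sum hQ hτ hsub hsing hvhat t S H
  rw [sum_add_distrib, sum_const, nsmul_eq_mul] at hsplit
  have hprice := sum_inter_add_sum_sdiff S H Q
  have hcard : τ * ((S \ H).card : ℝ) ≤ τ * (X \ H).card := by
    gcongr
  linarith

end Surplus

theorem surplus_tau_lipschitz_general {T C : Type*} {m : ℕ} [DecidableEq C]
    (coord : T → Fin m → C)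
    (v : T → Finset (Fin m) → ℝ) (Vv : C → ℝ)
    (hsub : ∀ t (U W : Finset (Fin m)), v t (U ∪ W) ≤ v t U + v t W)
    (hext : ∀ t t' (S : Finset (Fin m)),
      (∀ j ∈ S, coord t j = coord t' j) → v t S = v t' S)
    (hsing : ∀ t j, v t {j} = Vv (coord t j))
    (Q : Fin m → ℝ) (τ : ℝ) (hQ : ∀ j, 0 ≤ Q j) (hτ : 0 ≤ τ)
    -- `v̂(t,S) = v(t, S ∩ Y(t))` with `Y(t) = {j : V(t_j) < Q_j + τ}`
    (vhat : T → Finset (Fin m) → ℝ)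
    (hvhat : ∀ t S, vhat t S =
      v t (S ∩ Finset.univ.filter (fun j => Vv (coord t j) < Q j + τ)))
    (t t' : T) (X Y : Finset (Fin m)) :
    |surplusFn vhat Q t X - surplusFn vhat Q t' Y| ≤
      τ * ((((X \ Y) ∪ (Y \ X)).card : ℝ) + ((X ∩ Y).card : ℝ) -
        (((X ∩ Y).filter (fun j => coord t j = coord t' j)).card : ℝ)) := by
  set H := (X ∩ Y).filter (fun j => coord t j = coord t' j)
  have hHXY : H ⊆ X ∩ Y := filter_subset _ _
  have hHYX : H ⊆ Y ∩ X := inter_comm X Y ▸ hHXY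
  have hagree : ∀ j ∈ H, coord t j = coord t' j := fun j hj => (mem_filter.1 hj).2
  have hcardY := card_sdiff_le_of_subset_inter hHYX
  rw [union_comm, inter_comm] at hcardY
  rw [abs_sub_le_iff]
  constructor
  · calc _ ≤ τ * (X \ H).card :=
          surplusFn_sub_le hQ hτ hsub hext hsing hvhat (hHXY.trans inter_subset_right) hagree
      _ ≤ _ := mul_le_mul_of_nonneg_left (card_sdiff_le_of_subset_inter hHXY) hτ
  · calc _ ≤ τ * (Y \ H).card :=
          surplusFn_sub_le hQ hτ hsub hext hsing hvhat (hHXY.trans inter_subset_left)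
            fun j hj => (hagree j hj).symm
      _ ≤ _ := mul_le_mul_of_nonneg_left hcardY hτ

/-- `μ` is `τ`-Lipschitz: `|μ(t,X) − μ(t',Y)| ≤ τ·(|X Δ Y| + |X ∩ Y| − |H|)` where
`H = {j ∈ X ∩ Y : t_j = t'_j}`. -/
theorem surplus_tau_lipschitz {T C : Type*} {m : ℕ} [DecidableEq C]
    (coord : T → Fin m → C)
    (v : T → Finset (Fin m) → ℝ) (Vv : C → ℝ)
    (hv0 : ∀ t S, 0 ≤ v t S)
    (hmono : ∀ t (U W : Finset (Fin m)), U ⊆ W → v t U ≤ v t W)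
    (hsub : ∀ t (U W : Finset (Fin m)), v t (U ∪ W) ≤ v t U + v t W)
    (hext : ∀ t t' (S : Finset (Fin m)),
      (∀ j ∈ S, coord t j = coord t' j) → v t S = v t' S)
    (hsing : ∀ t j, v t {j} = Vv (coord t j))
    (Q : Fin m → ℝ) (τ : ℝ) (hQ : ∀ j, 0 ≤ Q j) (hτ : 0 ≤ τ)
    -- `v̂(t,S) = v(t, S ∩ Y(t))` with `Y(t) = {j : V(t_j) < Q_j + τ}`
    (vhat : T → Finset (Fin m) → ℝ)
    (hvhat : ∀ t S, vhat t S =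
      v t (S ∩ Finset.univ.filter (fun j => Vv (coord t j) < Q j + τ)))
    (t t' : T) (X Y : Finset (Fin m)) :
    |surplusFn vhat Q t X - surplusFn vhat Q t' Y| ≤
      τ * ((((X \ Y) ∪ (Y \ X)).card : ℝ) + ((X ∩ Y).card : ℝ) -
        (((X ∩ Y).filter (fun j => coord t j = coord t' j)).card : ℝ)) :=
  surplus_tau_lipschitz_general coord v Vv hsub hext hsing Q τ hQ hτ vhat hvhat t t' X Y
end

section
/- (Tail bound from truncation.) Let b_j, r_j ≥ 0 for j ∈ [m], c ≥ 0, and for each j let W_j be a nonnegative random variable (the value V(t_j)), with all W_j independent. Assume: (a) Σ_j Pr[W_j − b_j ≥ c] ≤ 1/2; (b) for every j,k with j ≠ k and every threshold x ≥ c: (b_k + x)·Pr[W_k − b_k ≥ x] ≤ r_k. Then Σ_j E[ 1[W_j ≥ b_j + c] · (W_j − b_j) · Σ_{k≠j} Pr[W_k − b_k ≥ W_j − b_j] ] ≤ Σ_j Pr[W_j ≥ b_j + c] · Σ_{k≠j} r_k. -/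
/-!
On the event `W_j ≥ b_j + c` put `x = W_j - b_j ≥ c`. Since `b_k ≥ 0`, each term of the integrand
satisfies `x · Pr[W_k - b_k ≥ x] ≤ (b_k + x) · Pr[W_k - b_k ≥ x] ≤ r_k` by (b), so the integrand is
bounded by `Σ_{k≠j} r_k` on that event and vanishes off it; integrating gives the bound.
-/

open MeasureTheory

theorem mul_sum_le_sum_of_add_mul_le {ι : Type*} (s : Finset ι) (b p r : ι → ℝ) (x : ℝ)
    (hb : ∀ k ∈ s, 0 ≤ b k) (hp : ∀ k ∈ s, 0 ≤ p k) (h : ∀ k ∈ s, (b k + x) * p k ≤ r k) :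
    x * ∑ k ∈ s, p k ≤ ∑ k ∈ s, r k := by
  rw [Finset.mul_sum]
  refine Finset.sum_le_sum fun k hk => ?_
  calc x * p k ≤ (b k + x) * p k := mul_le_mul_of_nonneg_right (by linarith [hb k hk]) (hp k hk)
    _ ≤ r k := h k hk

theorem integral_indicator_le_measureReal_mul {Ω : Type*} [MeasurableSpace Ω] (μ : Measure Ω)
    [IsFiniteMeasure μ] {S : Set Ω} (hS : MeasurableSet S) {g : Ω → ℝ} {C : ℝ}
    (hg0 : ∀ ω ∈ S, 0 ≤ g ω) (hgC : ∀ ω ∈ S, g ω ≤ C) :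
    ∫ ω, S.indicator g ω ∂μ ≤ μ.real S * C := by
  rw [integral_indicator hS, ← smul_eq_mul, ← setIntegral_const]
  exact integral_mono_of_nonneg (ae_restrict_of_forall_mem hS hg0) (integrable_const C)
    (ae_restrict_of_forall_mem hS hgC)

theorem tail_bound_from_truncation_general {Ω : Type*} [MeasurableSpace Ω]
    (μ : Measure Ω) [IsProbabilityMeasure μ]
    {m : ℕ} (W : Fin m → Ω → ℝ)
    (hWmeas : ∀ j, Measurable (W j))
    (b r : Fin m → ℝ) (hb : ∀ j, 0 ≤ b j)
    (c : ℝ) (hc : 0 ≤ c)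
    (hbb : ∀ j k, j ≠ k → ∀ x : ℝ, c ≤ x →
      (b k + x) * (μ {ω | x ≤ W k ω - b k}).toReal ≤ r k) :
    ∑ j, (∫ ω, (if b j + c ≤ W j ω then
        (W j ω - b j) *
          ∑ k ∈ Finset.univ.erase j, (μ {ω' | W j ω - b j ≤ W k ω' - b k}).toReal
      else 0) ∂μ) ≤
      ∑ j, (μ {ω | b j + c ≤ W j ω}).toReal * ∑ k ∈ Finset.univ.erase j, r k := by
  refine Finset.sum_le_sum fun j _ => ?_
  have hS : MeasurableSet {ω | b j + c ≤ W j ω} := measurableSet_le measurable_const (hWmeas j)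
  -- the `if`-integrand unfolds to the indicator of `{ω | b j + c ≤ W j ω}`
  refine integral_indicator_le_measureReal_mul μ hS (fun ω (hω : b j + c ≤ W j ω) => ?_)
    (fun ω (hω : b j + c ≤ W j ω) => ?_)
  · exact mul_nonneg (by linarith) (Finset.sum_nonneg fun _ _ => ENNReal.toReal_nonneg)
  · exact mul_sum_le_sum_of_add_mul_le _ b _ r _ (fun k _ => hb k)
      (fun _ _ => ENNReal.toReal_nonneg)
      (fun k hk => hbb j k (Finset.ne_of_mem_erase hk).symm _ (by linarith))

/-- Tail bound from truncation: the expected excess-value tail contribution is bounded by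
`Σ_j Pr[W_j ≥ b_j + c] · Σ_{k≠j} r_k`. -/
theorem tail_bound_from_truncation {Ω : Type*} [MeasurableSpace Ω]
    (μ : Measure Ω) [IsProbabilityMeasure μ]
    {m : ℕ} (W : Fin m → Ω → ℝ)
    (hWmeas : ∀ j, Measurable (W j))
    (hW0 : ∀ j ω, 0 ≤ W j ω)
    (hindep : ProbabilityTheory.iIndepFun W μ)
    (b r : Fin m → ℝ) (hb : ∀ j, 0 ≤ b j) (hr : ∀ j, 0 ≤ r j)
    (c : ℝ) (hc : 0 ≤ c)
    (ha : ∑ j, (μ {ω | c ≤ W j ω - b j}).toReal ≤ 1/2)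
    (hbb : ∀ j k, j ≠ k → ∀ x : ℝ, c ≤ x →
      (b k + x) * (μ {ω | x ≤ W k ω - b k}).toReal ≤ r k) :
    ∑ j, (∫ ω, (if b j + c ≤ W j ω then
        (W j ω - b j) *
          ∑ k ∈ Finset.univ.erase j, (μ {ω' | W j ω - b j ≤ W k ω' - b k}).toReal
      else 0) ∂μ) ≤
      ∑ j, (μ {ω | b j + c ≤ W j ω}).toReal * ∑ k ∈ Finset.univ.erase j, r k :=
  tail_bound_from_truncation_general μ W hWmeas b r hb c hc hbb
end
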